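/- arXiv:2507.06657 — 4 statements merged into one kernel-verified Lean document; each statement's English description precedes it below -/
import Mathlib

section
/- Let H be a real inner product space, X a set, and e : X → H a feature map; define K(x,y) = ⟪e(x), e(y)⟫ for x,y ∈ X. Let x₁,…,xₙ ∈ X be points whose Gram matrix G = (K(xᵢ,xⱼ))₁≤i,j≤n is invertible, let f ∈ H, and define the minimal-norm interpolator f̂(x) = Σᵢ wᵢ(x)·⟪f, e(xᵢ)⟫ where w(x) = G⁻¹·(K(xᵢ,x))ᵢ, and the power function C(x) = K(x,x) − Σ_{i,j} K(x,xᵢ)(G⁻¹)ᵢⱼK(xⱼ,x). Then for every x ∈ X, |⟪f, e(x)⟫ − f̂(x)| ≤ ‖f‖·√(C(x)). -/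
/-! The residual `e(y) − s`, where `s = ∑ᵢ wᵢ(y) e(xᵢ)`, is orthogonal to every `e(xᵢ)`:
`s` is the orthogonal projection of `e(y)` onto the span of the `e(xᵢ)`. Hence
`f(y) − f̂(y) = ⟪f, e(y) − s⟫` and `‖e(y) − s‖² = ⟪e(y), e(y) − s⟫ = C(y)`, and Cauchy–Schwarz
concludes. -/

open scoped RealInnerProductSpace

open Matrix

section GramProjection

variable {H ι : Type*} [NormedAddCommGroup H] [InnerProductSpace ℝ H] [Fintype ι]

lemma inner_sum_smul_eq_gram_mulVec (v : ι → H) (c : ι → ℝ) (i : ι) :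
    ⟪v i, ∑ j, c j • v j⟫ = (gram ℝ v *ᵥ c) i := by
  simp only [inner_sum, real_inner_smul_right, mulVec, dotProduct, gram_apply, mul_comm]

variable [DecidableEq ι]

noncomputable def gramProjection (v : ι → H) (u : H) : H :=
  ∑ j, ((gram ℝ v)⁻¹ *ᵥ fun k ↦ ⟪v k, u⟫) j • v j

variable {v : ι → H}

lemma inner_gramProjection (hv : IsUnit (gram ℝ v).det) (u : H) (i : ι) :
    ⟪v i, gramProjection v u⟫ = ⟪v i, u⟫ := by
  rw [gramProjection, inner_sum_smul_eq_gram_mulVec, mulVec_mulVec, mul_nonsing_inv _ hv,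
    one_mulVec]

lemma inner_gramProjection_sub_eq_zero (hv : IsUnit (gram ℝ v).det) (u : H) :
    ⟪gramProjection v u, u - gramProjection v u⟫ = 0 := by
  have hperp (i : ι) : ⟪v i, u - gramProjection v u⟫ = 0 := by
    rw [inner_sub_right, inner_gramProjection hv, sub_self]
  nth_rw 1 [gramProjection]
  simp only [sum_inner, real_inner_smul_left, hperp, mul_zero, Finset.sum_const_zero]

lemma norm_sub_gramProjection_sq (hv : IsUnit (gram ℝ v).det) (u : H) :
    ‖u - gramProjection v u‖ ^ 2 = ⟪u, u⟫ - ⟪u, gramProjection v u⟫ := by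
  rw [← real_inner_self_eq_norm_sq, inner_sub_left, inner_gramProjection_sub_eq_zero hv,
    sub_zero, inner_sub_right]

lemma inner_gramProjection_eq_sum (v : ι → H) (u f : H) :
    ⟪f, gramProjection v u⟫ = ∑ i, ∑ j, ⟪f, v i⟫ * (gram ℝ v)⁻¹ i j * ⟪v j, u⟫ := by
  simp only [gramProjection, inner_sum, real_inner_smul_right, mulVec, dotProduct,
    Finset.sum_mul]
  exact Finset.sum_congr rfl fun i _ ↦ Finset.sum_congr rfl fun j _ ↦ by ring

lemma abs_inner_sub_inner_gramProjection_le (hv : IsUnit (gram ℝ v).det) (f u : H) :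
    |⟪f, u⟫ - ⟪f, gramProjection v u⟫| ≤ ‖f‖ * √(⟪u, u⟫ - ⟪u, gramProjection v u⟫) := by
  rw [← norm_sub_gramProjection_sq hv, Real.sqrt_sq (norm_nonneg _), ← inner_sub_right]
  exact abs_real_inner_le_norm _ _

end GramProjection

/-- Approximation error bound in an RKHS (feature-map formulation):
for the minimal-norm interpolator `f̂` at points `x₁,…,xₙ` with invertible
Gram matrix, `|f(x) − f̂(x)| ≤ ‖f‖ √(C(x))` where `C` is the power function. -/
theorem rkhs_approx_error_bound
    {H X : Type*} [NormedAddCommGroup H] [InnerProductSpace ℝ H]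
    (e : X → H) (K : X → X → ℝ) (hK : ∀ a b, K a b = ⟪e a, e b⟫)
    (n : ℕ) (x : Fin n → X)
    (G : Matrix (Fin n) (Fin n) ℝ)
    (hG : ∀ i j, G i j = K (x i) (x j))
    (hGinv : IsUnit G.det)
    (f : H)
    (w : X → Fin n → ℝ)
    (hw : ∀ y i, w y i = ∑ j, G⁻¹ i j * K (x j) y)
    (fhat : X → ℝ)
    (hfhat : ∀ y, fhat y = ∑ i, w y i * ⟪f, e (x i)⟫)
    (C : X → ℝ)
    (hC : ∀ y, C y = K y y - ∑ i, ∑ j, K y (x i) * G⁻¹ i j * K (x j) y) :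
    ∀ y : X, |⟪f, e y⟫ - fhat y| ≤ ‖f‖ * Real.sqrt (C y) := by
  intro y
  obtain rfl : G = gram ℝ (e ∘ x) := Matrix.ext fun i j ↦ by rw [hG, hK, gram_apply]; rfl
  have hwy : w y = (gram ℝ (e ∘ x))⁻¹ *ᵥ fun k ↦ ⟪e (x k), e y⟫ := by
    ext i
    simp only [hw, hK, mulVec, dotProduct]
  have hfhat_y : fhat y = ⟪f, gramProjection (e ∘ x) (e y)⟫ := by
    simp only [hfhat, gramProjection, inner_sum, real_inner_smul_right, hwy, Function.comp_apply]
  have hC_y : C y = ⟪e y, e y⟫ - ⟪e y, gramProjection (e ∘ x) (e y)⟫ := by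
    simp only [hC, hK, inner_gramProjection_eq_sum, Function.comp_apply]
  rw [hfhat_y, hC_y]
  exact abs_inner_sub_inner_gramProjection_le hGinv f (e y)
end

section
/- Let n ≥ 2, let 0 ≤ x₁ < x₂ < … < xₙ ≤ 1, and let K(x,y) = cosh(min(x,y))·cosh(1−max(x,y))/sinh(1). Define the symmetric tridiagonal n×n matrix T with diagonal entries α₁ = tanh(x₁) + coth(x₂−x₁), αᵢ = coth(x_{i+1}−xᵢ) + coth(xᵢ−x_{i−1}) for 2 ≤ i ≤ n−1, αₙ = coth(xₙ−x_{n−1}) + tanh(1−xₙ), and off-diagonal entries T_{i,i+1} = T_{i+1,i} = βᵢ = −1/sinh(x_{i+1}−xᵢ) for 1 ≤ i ≤ n−1, all other entries zero. Then the Gram matrix G = (K(xᵢ,xⱼ))₁≤i,j≤n is invertible and G⁻¹ = T (equivalently, G·T is the identity matrix). -/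
/-!
For fixed `s`, the function `t ↦ K(s,t)` equals `cosh(1-s) cosh t / sinh 1` on `[0,s]` and
`cosh s cosh(1-t) / sinh 1` on `[s,1]`; both pieces solve `u'' = u`. For such `u` the addition
formulas make the difference quotients `u(b) coth(b-a) - u(a)/sinh(b-a)` and
`u(b) coth(c-b) - u(c)/sinh(c-b)` equal to `u'(b)` and `-u'(b)` exactly, while the `tanh` terms at
the ends reproduce `u'(0) = 0` and `u'(1) = 0` of the outer pieces. Hence entry `(i, j)` of `G T` is
the jump of `∂ₜK(xᵢ, t)` at `t = xⱼ`: zero unless `xᵢ = xⱼ`, where it is the Wronskian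
`(cosh(1-b) sinh b + cosh b sinh(1-b)) / sinh 1 = 1`.
-/

noncomputable def coth (t : ℝ) : ℝ := Real.cosh t / Real.sinh t

open Real Finset

noncomputable def sobolevKernel (s t : ℝ) : ℝ := cosh (min s t) * cosh (1 - max s t) / sinh 1

lemma sobolevKernel_of_le {s t : ℝ} (h : s ≤ t) :
    sobolevKernel s t = cosh s * cosh (1 - t) / sinh 1 := by
  rw [sobolevKernel, min_eq_left h, max_eq_right h]

lemma sobolevKernel_of_ge {s t : ℝ} (h : t ≤ s) :
    sobolevKernel s t = cosh (1 - s) * cosh t / sinh 1 := by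
  rw [sobolevKernel, min_eq_right h, max_eq_left h, mul_comm]

lemma cosh_mul_coth_sub_cosh_add_div_sinh (u v : ℝ) (hv : sinh v ≠ 0) :
    cosh u * coth v - cosh (u + v) / sinh v = -sinh u := by
  rw [coth, cosh_add]; field_simp; ring

lemma cosh_mul_coth_sub_cosh_sub_div_sinh (u v : ℝ) (hv : sinh v ≠ 0) :
    cosh u * coth v - cosh (u - v) / sinh v = sinh u := by
  rw [coth, cosh_sub]; field_simp; ring

lemma cosh_mul_tanh (u : ℝ) : cosh u * tanh u = sinh u := by
  rw [tanh_eq_sinh_div_cosh]; field_simp [(cosh_pos u).ne']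

lemma sinh_sub_ne_zero_of_lt {a b : ℝ} (h : a < b) : sinh (b - a) ≠ 0 :=
  (sinh_pos_iff.2 (sub_pos.2 h)).ne'

lemma wronskian_cosh_cosh_one_sub (b : ℝ) :
    cosh (1 - b) * sinh b / sinh 1 + cosh b * sinh (1 - b) / sinh 1 = 1 := by
  have h1 : sinh 1 ≠ 0 := (sinh_pos_iff.2 one_pos).ne'
  rw [← add_div, div_eq_one_iff_eq h1]
  have := sinh_add b (1 - b)
  rw [add_sub_cancel] at this
  linarith

lemma sobolevKernel_backward_of_le {s a b : ℝ} (hs : s ≤ a) (hab : a < b) :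
    sobolevKernel s b * coth (b - a) - sobolevKernel s a / sinh (b - a) =
      -(cosh s * sinh (1 - b) / sinh 1) := by
  rw [sobolevKernel_of_le (hs.trans hab.le), sobolevKernel_of_le hs]
  have := cosh_mul_coth_sub_cosh_add_div_sinh (1 - b) (b - a) (sinh_sub_ne_zero_of_lt hab)
  rw [show 1 - b + (b - a) = 1 - a by ring] at this
  linear_combination cosh s / sinh 1 * this

lemma sobolevKernel_backward_of_ge {s a b : ℝ} (hab : a < b) (hs : b ≤ s) :
    sobolevKernel s b * coth (b - a) - sobolevKernel s a / sinh (b - a) =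
      cosh (1 - s) * sinh b / sinh 1 := by
  rw [sobolevKernel_of_ge hs, sobolevKernel_of_ge (hab.le.trans hs)]
  have := cosh_mul_coth_sub_cosh_sub_div_sinh b (b - a) (sinh_sub_ne_zero_of_lt hab)
  rw [sub_sub_cancel] at this
  linear_combination cosh (1 - s) / sinh 1 * this

lemma sobolevKernel_forward_of_le {s b c : ℝ} (hs : s ≤ b) (hbc : b < c) :
    sobolevKernel s b * coth (c - b) - sobolevKernel s c / sinh (c - b) =
      cosh s * sinh (1 - b) / sinh 1 := by
  rw [sobolevKernel_of_le hs, sobolevKernel_of_le (hs.trans hbc.le)]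
  have := cosh_mul_coth_sub_cosh_sub_div_sinh (1 - b) (c - b) (sinh_sub_ne_zero_of_lt hbc)
  rw [show 1 - b - (c - b) = 1 - c by ring] at this
  linear_combination cosh s / sinh 1 * this

lemma sobolevKernel_forward_of_ge {s b c : ℝ} (hbc : b < c) (hs : c ≤ s) :
    sobolevKernel s b * coth (c - b) - sobolevKernel s c / sinh (c - b) =
      -(cosh (1 - s) * sinh b / sinh 1) := by
  rw [sobolevKernel_of_ge (hbc.le.trans hs), sobolevKernel_of_ge hs]
  have := cosh_mul_coth_sub_cosh_add_div_sinh b (c - b) (sinh_sub_ne_zero_of_lt hbc)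
  rw [add_sub_cancel] at this
  linear_combination cosh (1 - s) / sinh 1 * this

lemma sobolevKernel_mul_tanh {s a : ℝ} (hs : a ≤ s) :
    sobolevKernel s a * tanh a = cosh (1 - s) * sinh a / sinh 1 := by
  rw [sobolevKernel_of_ge hs, ← cosh_mul_tanh a]; ring

lemma sobolevKernel_mul_tanh_one_sub {s b : ℝ} (hs : s ≤ b) :
    sobolevKernel s b * tanh (1 - b) = cosh s * sinh (1 - b) / sinh 1 := by
  rw [sobolevKernel_of_le hs, ← cosh_mul_tanh (1 - b)]; ring

lemma sobolevKernel_first_column {s a b : ℝ} (hab : a < b) (hs : s = a ∨ b ≤ s) :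
    sobolevKernel s a * (tanh a + coth (b - a)) - sobolevKernel s b / sinh (b - a) =
      if s = a then 1 else 0 := by
  rcases hs with rfl | hs
  · rw [if_pos rfl]
    linear_combination sobolevKernel_mul_tanh (le_refl s) + sobolevKernel_forward_of_le le_rfl hab +
      wronskian_cosh_cosh_one_sub s
  · rw [if_neg (by linarith)]
    linear_combination sobolevKernel_mul_tanh (hab.le.trans hs) + sobolevKernel_forward_of_ge hab hs

lemma sobolevKernel_interior_column {s a b c : ℝ} (hab : a < b) (hbc : b < c)
    (hs : s ≤ a ∨ s = b ∨ c ≤ s) :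
    -(sobolevKernel s a / sinh (b - a)) + sobolevKernel s b * (coth (c - b) + coth (b - a)) -
      sobolevKernel s c / sinh (c - b) = if s = b then 1 else 0 := by
  rcases hs with hs | rfl | hs
  · rw [if_neg (by linarith)]
    linear_combination sobolevKernel_backward_of_le hs hab +
      sobolevKernel_forward_of_le (hs.trans hab.le) hbc
  · rw [if_pos rfl]
    linear_combination sobolevKernel_backward_of_ge hab le_rfl +
      sobolevKernel_forward_of_le le_rfl hbc + wronskian_cosh_cosh_one_sub s
  · rw [if_neg (by linarith)]
    linear_combination sobolevKernel_backward_of_ge hab (hbc.le.trans hs) +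
      sobolevKernel_forward_of_ge hbc hs

lemma sobolevKernel_last_column {s a b : ℝ} (hab : a < b) (hs : s ≤ a ∨ s = b) :
    -(sobolevKernel s a / sinh (b - a)) + sobolevKernel s b * (coth (b - a) + tanh (1 - b)) =
      if s = b then 1 else 0 := by
  rcases hs with hs | rfl
  · rw [if_neg (by linarith)]
    linear_combination sobolevKernel_backward_of_le hs hab +
      sobolevKernel_mul_tanh_one_sub (hs.trans hab.le)
  · rw [if_pos rfl]
    linear_combination sobolevKernel_backward_of_ge hab le_rfl +
      sobolevKernel_mul_tanh_one_sub (le_refl s) + wronskian_cosh_cosh_one_sub s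

/- `T` with entries indexed by `ℕ`, so that column sums of `G T` become sums over `range n`. -/
noncomputable def sobolevTridiagEntry (n : ℕ) (x : ℕ → ℝ) (i j : ℕ) : ℝ :=
  if i = j then
    (if i = 0 then tanh (x 0) + coth (x 1 - x 0)
     else if i = n - 1 then coth (x (n - 1) - x (n - 2)) + tanh (1 - x (n - 1))
     else coth (x (i + 1) - x i) + coth (x i - x (i - 1)))
  else if j = i + 1 then -(1 / sinh (x j - x i))
  else if i = j + 1 then -(1 / sinh (x i - x j))
  else 0

noncomputable def sobolevTridiag (n : ℕ) (x : ℕ → ℝ) : Matrix (Fin n) (Fin n) ℝ :=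
  Matrix.of fun i j => sobolevTridiagEntry n x i j

noncomputable def sobolevGram (n : ℕ) (x : ℕ → ℝ) : Matrix (Fin n) (Fin n) ℝ :=
  Matrix.of fun i j => sobolevKernel (x i) (x j)

section Tridiagonal

variable {n : ℕ} {x : ℕ → ℝ}

lemma sobolevTridiagEntry_eq_zero {i j : ℕ} (hij : i ≠ j) (hji : j ≠ i + 1)
    (hij' : i ≠ j + 1) :
    sobolevTridiagEntry n x i j = 0 := by
  rw [sobolevTridiagEntry, if_neg hij, if_neg hji, if_neg hij']

lemma sum_mul_sobolevTridiagEntry_first (m : ℕ) (f : ℕ → ℝ) :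
    ∑ k ∈ range (m + 2), f k * sobolevTridiagEntry (m + 2) x k 0 =
      f 0 * (tanh (x 0) + coth (x 1 - x 0)) - f 1 / sinh (x 1 - x 0) := by
  rw [← sum_subset (s₁ := {0, 1})
      (by intro k hk; simp only [mem_insert, mem_singleton, mem_range] at hk ⊢; omega),
    sum_pair zero_ne_one]
  · simp [sobolevTridiagEntry, sub_eq_add_neg, div_eq_mul_inv]
  · intro k hk hk'
    simp only [mem_range, mem_insert, mem_singleton, not_or] at hk hk'
    rw [sobolevTridiagEntry_eq_zero (by omega) (by omega) (by omega), mul_zero]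

lemma sum_mul_sobolevTridiagEntry_interior {j : ℕ} (hjn : j + 2 < n) (f : ℕ → ℝ) :
    ∑ k ∈ range n, f k * sobolevTridiagEntry n x k (j + 1) =
      -(f j / sinh (x (j + 1) - x j)) +
        f (j + 1) * (coth (x (j + 2) - x (j + 1)) + coth (x (j + 1) - x j)) -
        f (j + 2) / sinh (x (j + 2) - x (j + 1)) := by
  rw [← sum_subset (s₁ := {j, j + 1, j + 2})
      (by intro k hk; simp only [mem_insert, mem_singleton, mem_range] at hk ⊢; omega),
    sum_insert (by simp), sum_pair (by omega)]
  · simp [sobolevTridiagEntry, show j + 1 ≠ n - 1 by omega, add_assoc, sub_eq_add_neg,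
      div_eq_mul_inv]
  · intro k hk hk'
    simp only [mem_range, mem_insert, mem_singleton, not_or] at hk hk'
    rw [sobolevTridiagEntry_eq_zero (by omega) (by omega) (by omega), mul_zero]

lemma sum_mul_sobolevTridiagEntry_last (m : ℕ) (f : ℕ → ℝ) :
    ∑ k ∈ range (m + 2), f k * sobolevTridiagEntry (m + 2) x k (m + 1) =
      -(f m / sinh (x (m + 1) - x m)) +
        f (m + 1) * (coth (x (m + 1) - x m) + tanh (1 - x (m + 1))) := by
  rw [← sum_subset (s₁ := {m, m + 1})
      (by intro k hk; simp only [mem_insert, mem_singleton, mem_range] at hk ⊢; omega),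
    sum_pair (by omega)]
  · simp [sobolevTridiagEntry, div_eq_mul_inv]
  · intro k hk hk'
    simp only [mem_range, mem_insert, mem_singleton, not_or] at hk hk'
    rw [sobolevTridiagEntry_eq_zero (by omega) (by omega) (by omega), mul_zero]

end Tridiagonal

theorem sobolevGram_mul_sobolevTridiag {n : ℕ} (hn : 2 ≤ n) {x : ℕ → ℝ}
    (hx : StrictMonoOn x (Set.Iio n)) : sobolevGram n x * sobolevTridiag n x = 1 := by
  obtain ⟨m, rfl⟩ : ∃ m, n = m + 2 := ⟨n - 2, by omega⟩
  have hlt {k l : ℕ} (hkl : k < l) (hl : l < m + 2) : x k < x l :=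
    hx (show k < m + 2 by omega) hl hkl
  have hle {k l : ℕ} (hkl : k ≤ l) (hl : l < m + 2) : x k ≤ x l :=
    hx.monotoneOn (show k < m + 2 by omega) hl hkl
  ext i j
  have hi := i.isLt
  have hij : i = j ↔ x i = x j := Fin.val_inj.symm.trans (hx.injOn.eq_iff hi j.isLt).symm
  simp only [Matrix.mul_apply, Matrix.one_apply, hij, sobolevGram, sobolevTridiag, Matrix.of_apply]
  rw [Fin.sum_univ_eq_sum_range (fun k => sobolevKernel (x i) (x k) * sobolevTridiagEntry _ x k j)]
  obtain ⟨_ | l, hj⟩ := j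
  · rw [sum_mul_sobolevTridiagEntry_first]
    refine sobolevKernel_first_column (hlt one_pos (by omega)) ?_
    rcases Nat.eq_zero_or_pos (i : ℕ) with h | h
    exacts [Or.inl (congrArg x h), Or.inr (hle h hi)]
  obtain hl | rfl : l + 2 < m + 2 ∨ l = m := by omega
  · rw [sum_mul_sobolevTridiagEntry_interior hl]
    refine sobolevKernel_interior_column (hlt (by omega) (by omega)) (hlt (by omega) hl) ?_
    obtain h | h | h : (i : ℕ) ≤ l ∨ (i : ℕ) = l + 1 ∨ l + 2 ≤ i := by omega
    exacts [Or.inl (hle h (by omega)), Or.inr (Or.inl (congrArg x h)), Or.inr (Or.inr (hle h hi))]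
  · rw [sum_mul_sobolevTridiagEntry_last]
    refine sobolevKernel_last_column (hlt (by omega) (by omega)) ?_
    obtain h | h : (i : ℕ) ≤ l ∨ (i : ℕ) = l + 1 := by omega
    exacts [Or.inl (hle h (by omega)), Or.inr (congrArg x h)]

theorem sobolev_gram_inverse_tridiagonal_general
    (n : ℕ) (hn : 2 ≤ n)
    (x : ℕ → ℝ)
    (hmono : ∀ i j : ℕ, i < j → j < n → x i < x j)
    (K : ℝ → ℝ → ℝ)
    (hK : ∀ s t, K s t =
      Real.cosh (min s t) * Real.cosh (1 - max s t) / Real.sinh 1)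
    (G : Matrix (Fin n) (Fin n) ℝ)
    (hG : ∀ i j : Fin n, G i j = K (x i) (x j))
    (T : Matrix (Fin n) (Fin n) ℝ)
    (hT : ∀ i j : Fin n, T i j =
      if (i : ℕ) = (j : ℕ) then
        (if (i : ℕ) = 0 then Real.tanh (x 0) + coth (x 1 - x 0)
         else if (i : ℕ) = n - 1 then
           coth (x (n - 1) - x (n - 2)) + Real.tanh (1 - x (n - 1))
         else coth (x ((i : ℕ) + 1) - x i) + coth (x i - x ((i : ℕ) - 1)))
      else if (j : ℕ) = (i : ℕ) + 1 then -(1 / Real.sinh (x j - x i))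
      else if (i : ℕ) = (j : ℕ) + 1 then -(1 / Real.sinh (x i - x j))
      else 0) :
    IsUnit G.det ∧ G⁻¹ = T := by
  have hGT : G * T = 1 := by
    have hG' : G = sobolevGram n x := Matrix.ext fun i j => by rw [hG, hK]; rfl
    have hT' : T = sobolevTridiag n x := Matrix.ext fun i j => hT i j
    rw [hG', hT']
    exact sobolevGram_mul_sobolevTridiag hn fun i hi j hj hij => hmono i j hij hj
  exact ⟨Matrix.isUnit_det_of_right_inverse hGT, Matrix.inv_eq_right_inv hGT⟩

/-- The inverse of the Gram matrix of the Sobolev `H¹(0,1)` kernel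
`K(x,y) = cosh(min(x,y)) cosh(1 − max(x,y)) / sinh 1` at ordered points
`0 ≤ x₁ < … < xₙ ≤ 1` is the explicit symmetric tridiagonal matrix `T` with
diagonal `tanh`/`coth` entries and off-diagonal entries `−1/sinh(xᵢ₊₁−xᵢ)`.
(Here points are indexed `x 0, …, x (n−1)`.) -/
theorem sobolev_gram_inverse_tridiagonal
    (n : ℕ) (hn : 2 ≤ n)
    (x : ℕ → ℝ)
    (hx0 : 0 ≤ x 0) (hx1 : x (n - 1) ≤ 1)
    (hmono : ∀ i j : ℕ, i < j → j < n → x i < x j)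
    (K : ℝ → ℝ → ℝ)
    (hK : ∀ s t, K s t =
      Real.cosh (min s t) * Real.cosh (1 - max s t) / Real.sinh 1)
    (G : Matrix (Fin n) (Fin n) ℝ)
    (hG : ∀ i j : Fin n, G i j = K (x i) (x j))
    (T : Matrix (Fin n) (Fin n) ℝ)
    (hT : ∀ i j : Fin n, T i j =
      if (i : ℕ) = (j : ℕ) then
        (if (i : ℕ) = 0 then Real.tanh (x 0) + coth (x 1 - x 0)
         else if (i : ℕ) = n - 1 then
           coth (x (n - 1) - x (n - 2)) + Real.tanh (1 - x (n - 1))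
         else coth (x ((i : ℕ) + 1) - x i) + coth (x i - x ((i : ℕ) - 1)))
      else if (j : ℕ) = (i : ℕ) + 1 then -(1 / Real.sinh (x j - x i))
      else if (i : ℕ) = (j : ℕ) + 1 then -(1 / Real.sinh (x i - x j))
      else 0) :
    IsUnit G.det ∧ G⁻¹ = T :=
  sobolev_gram_inverse_tridiagonal_general n hn x hmono K hK G hG T hT
end

section
/- Let f : [0,1] → ℝ be continuously differentiable and let c_ℓ = ∫₀¹ f(x)·φ_ℓ(x) dx for ℓ ∈ ℕ. Then ∫₀¹ f(x)² dx + ∫₀¹ f′(x)² dx = Σ_{ℓ=0}^{∞} (1 + λ_ℓ)·c_ℓ², where λ_ℓ = π²ℓ² (in particular the series on the right converges). -/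
/-!
Extend `f` evenly to `[-1, 1]`. Its Fourier coefficients on this interval of length 2 are the
cosine coefficients `aₙ = ∫₀¹ f(x) cos(πnx) dx`, so Parseval on `[-1, 1]` gives `∑ₙ aₙ² = ∫₀¹ f²`.
The even extension takes equal values at `±1` and its derivative is the odd extension of `f'`,
whose Fourier coefficients are therefore `πin · aₙ`; Parseval for it gives
`∑ₙ π²n² aₙ² = ∫₀¹ f'²`. Folding the even sums over `ℤ` onto `ℕ` produces the weights `1` and
`2` that turn `aₙ` into the coefficients `c_ℓ` in the basis `φ_ℓ`.
-/

open MeasureTheory Set Real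

theorem integral_symm_eq_integral_add_neg {E : Type*} [NormedAddCommGroup E] [NormedSpace ℝ E]
    {f : ℝ → E} {a : ℝ} (hf : IntervalIntegrable f volume (-a) a) :
    ∫ x in -a..a, f x = ∫ x in (0:ℝ)..a, (f x + f (-x)) := by
  have h0 : (0:ℝ) ∈ uIcc (-a) a := by
    rcases le_total 0 a with h | h <;> simp [uIcc, h]
  have hleft : IntervalIntegrable f volume (-a) 0 := hf.mono_set (uIcc_subset_uIcc_left h0)
  have hright : IntervalIntegrable f volume 0 a := hf.mono_set (uIcc_subset_uIcc_right h0)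
  have hneg : IntervalIntegrable (fun x => f (-x)) volume 0 a := by
    simpa using ((IntervalIntegrable.iff_comp_neg).mp hleft).symm
  rw [← intervalIntegral.integral_add_adjacent_intervals hleft hright,
    intervalIntegral.integral_add hright hneg, intervalIntegral.integral_comp_neg, neg_zero,
    add_comm]

theorem integral_comp_abs_symm {u : ℝ → ℝ} (hu : Continuous u) {a : ℝ} (ha : 0 ≤ a) :
    ∫ x in -a..a, u |x| = 2 * ∫ x in (0:ℝ)..a, u x := by
  have hint : Continuous fun x => u |x| := by fun_prop
  rw [integral_symm_eq_integral_add_neg (hint.intervalIntegrable _ _),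
    ← intervalIntegral.integral_const_mul]
  refine intervalIntegral.integral_congr fun x hx => ?_
  rw [uIcc_of_le ha] at hx
  simp only [abs_neg, abs_of_nonneg hx.1]
  ring

theorem HasSum.nat_ite_of_even {M : Type*} [AddCommGroup M] [TopologicalSpace M]
    [IsTopologicalAddGroup M] {g : ℤ → M} {s : M} (hg : HasSum g s) (heven : ∀ n, g (-n) = g n) :
    HasSum (fun ℓ : ℕ => if ℓ = 0 then g 0 else 2 • g ℓ) s := by
  convert hg.nat_add_neg.sub (hasSum_ite_eq 0 (g 0)) using 1
  · funext ℓ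
    rcases eq_or_ne ℓ 0 with rfl | hℓ
    · simp
    · simp [hℓ, heven, two_smul]
  · abel

theorem memLp_restrict_Ioc_of_norm_le {E : Type*} [NormedAddCommGroup E] {F : ℝ → E}
    {u : ℝ → ℝ} {a b : ℝ} {p : ENNReal}
    (hF : AEStronglyMeasurable F (volume.restrict (Ioc a b))) (hu : Continuous u)
    (hFu : ∀ x, ‖F x‖ ≤ u x) : MemLp F p (volume.restrict (Ioc a b)) := by
  obtain ⟨C, hC⟩ := (isCompact_Icc (a := a) (b := b)).exists_bound_of_continuousOn hu.continuousOn
  refine MemLp.of_bound hF C (ae_restrict_of_forall_mem measurableSet_Ioc fun x hx => ?_)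
  exact (hFu x).trans ((le_abs_self _).trans (hC x (Ioc_subset_Icc_self hx)))

theorem fourierCoeffOn_of_hasDeriv_right_of_eq {a b : ℝ} (hab : a < b) {f f' : ℝ → ℂ}
    (hf : ContinuousOn f (uIcc a b))
    (hff' : ∀ x ∈ Ioo (min a b) (max a b), HasDerivWithinAt f (f' x) (Ioi x) x)
    (hf' : IntervalIntegrable f' volume a b) (hfab : f a = f b) (n : ℤ) :
    fourierCoeffOn hab f' n = 2 * π * Complex.I * n / (b - a) * fourierCoeffOn hab f n := by
  rcases eq_or_ne n 0 with rfl | hn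
  · simp [fourierCoeffOn_eq_integral,
      intervalIntegral.integral_eq_sub_of_hasDeriv_right hf hff' hf', hfab]
  · have hba : (b : ℂ) - a ≠ 0 := sub_ne_zero.mpr (Complex.ofReal_injective.ne hab.ne')
    rw [fourierCoeffOn_of_hasDeriv_right hab hn hf hff' hf', hfab, sub_self, mul_zero, zero_sub]
    field_simp

noncomputable def cosineCoeff (f : ℝ → ℝ) (n : ℤ) : ℝ := ∫ x in (0:ℝ)..1, f x * cos (π * n * x)

theorem cosineCoeff_neg (f : ℝ → ℝ) (n : ℤ) : cosineCoeff f (-n) = cosineCoeff f n := by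
  simp [cosineCoeff]

/-- The value `g 0` at `0` makes `oddExt f'` the right derivative of `x ↦ f |x|` at every point,
including `0`. -/
noncomputable def oddExt (g : ℝ → ℝ) (x : ℝ) : ℝ := if 0 ≤ x then g x else -g (-x)

theorem abs_oddExt (g : ℝ → ℝ) (x : ℝ) : |oddExt g x| = |g (|x|)| := by
  unfold oddExt
  split_ifs with hx
  · rw [abs_of_nonneg hx]
  · rw [abs_neg, abs_of_neg (not_le.mp hx)]

theorem measurable_oddExt {g : ℝ → ℝ} (hg : Continuous g) : Measurable (oddExt g) :=
  Measurable.ite measurableSet_Ici hg.measurable (hg.comp continuous_neg).measurable.neg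

theorem hasDerivWithinAt_comp_abs_Ioi {f f' : ℝ → ℝ} (hf : ∀ x, HasDerivAt f (f' x) x) (x : ℝ) :
    HasDerivWithinAt (fun y => f |y|) (oddExt f' x) (Ioi x) x := by
  by_cases hx : 0 ≤ x
  · rw [oddExt, if_pos hx]
    exact (hf x).hasDerivWithinAt.congr (fun y hy => by rw [abs_of_nonneg (hx.trans hy.le)])
      (by rw [abs_of_nonneg hx])
  · rw [oddExt, if_neg hx]
    have hneg : HasDerivAt (fun y => f (-y)) (-f' (-x)) x := by
      simpa [Function.comp_def] using (hf (-x)).comp x (hasDerivAt_neg x)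
    refine (hneg.congr_of_eventuallyEq ?_).hasDerivWithinAt
    filter_upwards [Iio_mem_nhds (not_le.mp hx)] with y hy
    rw [abs_of_neg hy]

theorem fourierCoeffOn_comp_abs {f : ℝ → ℝ} (hf : Continuous f) (n : ℤ) :
    fourierCoeffOn (neg_one_lt_zero.trans one_pos) (fun x => (f |x| : ℂ)) n = cosineCoeff f n := by
  have hT : Fact ((0:ℝ) < 1 - -1) := ⟨by norm_num⟩
  have heven : ∀ x ∈ uIcc (0:ℝ) 1,
      fourier (-n) (x : AddCircle (1 - -1 : ℝ)) • (f |x| : ℂ)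
        + fourier (-n) ((-x : ℝ) : AddCircle (1 - -1 : ℝ)) • (f |-x| : ℂ)
        = ((2 * (f x * cos (π * n * x)) : ℝ) : ℂ) := by
    intro x hx
    rw [uIcc_of_le zero_le_one] at hx
    have hpos : 2 * π * Complex.I * ↑(-n) * ↑x / ↑(1 - -1 : ℝ)
        = -(π * n * x : ℂ) * Complex.I := by
      push_cast; ring
    have hneg : 2 * π * Complex.I * ↑(-n) * ↑(-x) / ↑(1 - -1 : ℝ)
        = (π * n * x : ℂ) * Complex.I := by
      push_cast; ring
    simp only [fourier_coe_apply, abs_neg, abs_of_nonneg hx.1, smul_eq_mul, hpos, hneg]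
    push_cast
    rw [Complex.cos]
    ring
  have hint :
      Continuous fun x : ℝ => fourier (-n) (x : AddCircle (1 - -1 : ℝ)) • (f |x| : ℂ) := by
    have := (map_continuous (fourier (T := 1 - -1) (-n))).comp (AddCircle.continuous_mk' _)
    fun_prop
  rw [fourierCoeffOn_eq_integral, integral_symm_eq_integral_add_neg (hint.intervalIntegrable _ _),
    intervalIntegral.integral_congr heven, intervalIntegral.integral_ofReal,
    intervalIntegral.integral_const_mul, Complex.real_smul, cosineCoeff]
  push_cast
  ring

theorem hasSum_sq_cosineCoeff {f : ℝ → ℝ} (hf : Continuous f) :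
    HasSum (fun n : ℤ => cosineCoeff f n ^ 2) (∫ x in (0:ℝ)..1, f x ^ 2) := by
  have hF : Continuous fun x => (f |x| : ℂ) := by fun_prop
  have hL2 : MemLp (fun x => (f |x| : ℂ)) 2 (volume.restrict (Ioc (-1) 1)) :=
    memLp_restrict_Ioc_of_norm_le hF.aestronglyMeasurable
      (by fun_prop : Continuous fun x => |f (|x|)|) (fun x => by simp)
  have h := hasSum_sq_fourierCoeffOn (neg_one_lt_zero.trans one_pos) hL2
  simp only [fourierCoeffOn_comp_abs hf, Complex.norm_real, norm_eq_abs, sq_abs,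
    smul_eq_mul] at h
  rw [integral_comp_abs_symm (u := fun x => f x ^ 2) (by fun_prop) zero_le_one] at h
  convert h using 1
  ring

theorem hasSum_sq_mul_cosineCoeff {f f' : ℝ → ℝ} (hf : ∀ x, HasDerivAt f (f' x) x)
    (hf' : Continuous f') :
    HasSum (fun n : ℤ => (π * n) ^ 2 * cosineCoeff f n ^ 2) (∫ x in (0:ℝ)..1, f' x ^ 2) := by
  have hfc : Continuous f := continuous_iff_continuousAt.2 fun x => (hf x).continuousAt
  have hL2 : MemLp (fun x => (oddExt f' x : ℂ)) 2 (volume.restrict (Ioc (-1) 1)) :=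
    memLp_restrict_Ioc_of_norm_le
      (Complex.measurable_ofReal.comp (measurable_oddExt hf')).aestronglyMeasurable
      (by fun_prop : Continuous fun x => |f' (|x|)|) (fun x => by simp [abs_oddExt])
  have hcoeff : ∀ n : ℤ,
      fourierCoeffOn (neg_one_lt_zero.trans one_pos) (fun x => (oddExt f' x : ℂ)) n
        = π * Complex.I * n * cosineCoeff f n := by
    intro n
    rw [fourierCoeffOn_of_hasDeriv_right_of_eq (f := fun x => (f |x| : ℂ)) _
      (by fun_prop : Continuous fun x => (f |x| : ℂ)).continuousOn
      (fun x _ => (hasDerivWithinAt_comp_abs_Ioi hf x).ofReal_comp)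
      ((intervalIntegrable_iff_integrableOn_Ioc_of_le (by norm_num)).2
        (hL2.integrable one_le_two)) (by simp),
      fourierCoeffOn_comp_abs hfc]
    push_cast
    ring
  have h := hasSum_sq_fourierCoeffOn (neg_one_lt_zero.trans one_pos) hL2
  simp only [hcoeff, norm_mul, Complex.norm_real, Complex.norm_I, Complex.norm_intCast,
    norm_eq_abs, abs_oddExt, mul_pow, sq_abs, mul_one, smul_eq_mul] at h
  rw [integral_comp_abs_symm (u := fun x => f' x ^ 2) (by fun_prop) zero_le_one] at h
  convert h using 1
  · simp only [mul_pow]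
  · ring

/-- Spectral (Parseval) expression of the `H¹(0,1)` norm in the Poincaré
basis: for `f` continuously differentiable with coefficients
`c_ℓ = ∫₀¹ f φ_ℓ`, the series `Σ_ℓ (1+λ_ℓ) c_ℓ²` (with `λ_ℓ = π²ℓ²`)
converges and equals `∫₀¹ f² + ∫₀¹ f′²`. -/
theorem poincare_basis_parseval_h1_norm
    (φ : ℕ → ℝ → ℝ)
    (hφ : ∀ ℓ x, φ ℓ x =
      if ℓ = 0 then 1 else Real.sqrt 2 * Real.cos (Real.pi * ℓ * x))
    (f : ℝ → ℝ) (hf : ContDiff ℝ 1 f)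
    (c : ℕ → ℝ)
    (hc : ∀ ℓ, c ℓ = ∫ x in (0 : ℝ)..1, f x * φ ℓ x) :
    HasSum (fun ℓ : ℕ => (1 + Real.pi ^ 2 * ℓ ^ 2) * c ℓ ^ 2)
      ((∫ x in (0 : ℝ)..1, f x ^ 2) + ∫ x in (0 : ℝ)..1, deriv f x ^ 2) := by
  have hcos : ∀ ℓ : ℕ, c ℓ = if ℓ = 0 then cosineCoeff f 0 else √2 * cosineCoeff f ℓ := by
    intro ℓ
    rw [hc]
    split_ifs with hℓ
    · simp [hφ, hℓ, cosineCoeff]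
    · rw [cosineCoeff, ← intervalIntegral.integral_const_mul]
      refine intervalIntegral.integral_congr fun x _ => ?_
      simp only [hφ, hℓ, if_false, Int.cast_natCast]
      ring
  have hsum := (hasSum_sq_cosineCoeff hf.continuous).add (hasSum_sq_mul_cosineCoeff
    (fun x => (hf.differentiable one_ne_zero x).hasDerivAt) (hf.continuous_deriv le_rfl))
  refine (hsum.nat_ite_of_even fun n => ?_).congr_fun fun ℓ => ?_
  · simp only [cosineCoeff_neg, Int.cast_neg, mul_neg, neg_sq]
  rcases eq_or_ne ℓ 0 with rfl | hℓ
  · simp [hcos]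
  · simp only [hcos, hℓ, if_false, mul_pow, Real.sq_sqrt zero_le_two, Int.cast_natCast,
      nsmul_eq_mul]
    push_cast
    ring
end

section
/- Let f : [0,1] → ℝ be continuously differentiable, let ℓ ≥ 1, and let c_ℓ = ∫₀¹ f(x)·φ_ℓ(x) dx. Then sup_{x∈[0,1]} | f(x)·φ_ℓ(x) − c_ℓ | ≤ min( √2·sup_{[0,1]}|f| + min( sup_{[0,1]}|f|, sup_{[0,1]}|f′|/(πℓ) ), √2·( πℓ·sup_{[0,1]}|f| + sup_{[0,1]}|f′| ) ). -/
/-!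
Write `k = πℓ`, so that `φ_ℓ(x) = √2 cos(kx)` and `sin k = 0`. Both `√2 cos(kx)` and `√2 sin(kx)`
have unit `L²` norm on `[0, 1]`, hence `L¹` norm at most 1. This gives `|c_ℓ| ≤ sup|f|` directly,
and `|c_ℓ| ≤ sup|f′|/k` after one integration by parts, whose boundary terms vanish because
`sin k = 0`. For the second bound, `f φ_ℓ − c_ℓ` has mean zero on `[0, 1]`, so it vanishes
somewhere there, and the mean value theorem bounds it by the sup of its derivative
`f′ φ_ℓ + f φ_ℓ′`.
-/

open Real Set intervalIntegral

lemma abs_le_iSup_Icc {g : ℝ → ℝ} (hg : Continuous g) {x : ℝ} (hx : x ∈ Icc (0 : ℝ) 1) :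
    |g x| ≤ ⨆ y : Icc (0 : ℝ) 1, |g y| :=
  le_ciSup (isCompact_range (hg.abs.comp continuous_subtype_val)).bddAbove ⟨x, hx⟩

lemma integral_sqrt_two_mul_cos_mul_sq {k : ℝ} (hk : k ≠ 0) (hs : sin k = 0) :
    ∫ x in (0 : ℝ)..1, (√2 * cos (k * x)) ^ 2 = 1 := by
  simp_rw [mul_pow, sq_sqrt zero_le_two]
  rw [integral_const_mul, integral_comp_mul_left (fun x => cos x ^ 2) hk, integral_cos_sq]
  simp [hs]
  field_simp

lemma integral_sqrt_two_mul_sin_mul_sq {k : ℝ} (hk : k ≠ 0) (hs : sin k = 0) :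
    ∫ x in (0 : ℝ)..1, (√2 * sin (k * x)) ^ 2 = 1 := by
  simp_rw [mul_pow, sq_sqrt zero_le_two]
  rw [integral_const_mul, integral_comp_mul_left (fun x => sin x ^ 2) hk, integral_sin_sq]
  simp [hs]
  field_simp

lemma abs_integral_mul_le_of_integral_sq_eq_one {f g : ℝ → ℝ} {M : ℝ} (hf : Continuous f)
    (hg : Continuous g) (hM : ∀ x ∈ Icc (0 : ℝ) 1, |f x| ≤ M)
    (hg1 : ∫ x in (0 : ℝ)..1, g x ^ 2 = 1) :
    |∫ x in (0 : ℝ)..1, f x * g x| ≤ M := by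
  -- `|g| ≤ (1 + g²) / 2` stands in for Cauchy–Schwarz
  have hpt : ∀ x ∈ Icc (0 : ℝ) 1, |f x * g x| ≤ M / 2 * (1 + g x ^ 2) := by
    intro x hx
    have hg_le : |g x| ≤ (1 + g x ^ 2) / 2 := by
      nlinarith [sq_nonneg (|g x| - 1), sq_abs (g x)]
    calc |f x * g x| = |f x| * |g x| := abs_mul _ _
      _ ≤ M * ((1 + g x ^ 2) / 2) :=
          mul_le_mul (hM x hx) hg_le (abs_nonneg _) ((abs_nonneg _).trans (hM x hx))
      _ = M / 2 * (1 + g x ^ 2) := by ring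
  calc |∫ x in (0 : ℝ)..1, f x * g x| ≤ ∫ x in (0 : ℝ)..1, |f x * g x| :=
        abs_integral_le_integral_abs zero_le_one
    _ ≤ ∫ x in (0 : ℝ)..1, M / 2 * (1 + g x ^ 2) :=
        integral_mono_on zero_le_one ((hf.mul hg).abs.intervalIntegrable _ _)
          ((continuous_const.mul (continuous_const.add (hg.pow 2))).intervalIntegrable _ _) hpt
    _ = M := by
        rw [integral_const_mul, integral_add intervalIntegrable_const
          ((by fun_prop : Continuous fun x => g x ^ 2).intervalIntegrable _ _), hg1]
        norm_num

lemma integral_mul_cos_mul {f : ℝ → ℝ} (hf : ContDiff ℝ 1 f) {k : ℝ} (hk : k ≠ 0)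
    (hs : sin k = 0) :
    ∫ x in (0 : ℝ)..1, f x * cos (k * x) = -k⁻¹ * ∫ x in (0 : ℝ)..1, deriv f x * sin (k * x) := by
  have hsin : ∀ x, HasDerivAt (fun y => k⁻¹ * sin (k * y)) (cos (k * x)) x := fun x =>
    ((((hasDerivAt_id' x).const_mul k).sin).const_mul k⁻¹).congr_deriv (by field_simp)
  rw [integral_mul_deriv_eq_deriv_mul
    (fun x _ => ((hf.differentiable one_ne_zero) x).hasDerivAt) (fun x _ => hsin x)
    ((hf.continuous_deriv le_rfl).intervalIntegrable _ _)
    ((by fun_prop : Continuous fun x => cos (k * x)).intervalIntegrable _ _)]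
  simp only [mul_one, mul_zero, hs, sin_zero, zero_sub, mul_left_comm _ k⁻¹, integral_const_mul]
  ring

lemma abs_integral_mul_sqrt_two_cos_mul_le_of_deriv {f : ℝ → ℝ} (hf : ContDiff ℝ 1 f)
    {k M' : ℝ} (hk : 0 < k) (hs : sin k = 0) (hM' : ∀ x ∈ Icc (0 : ℝ) 1, |deriv f x| ≤ M') :
    |∫ x in (0 : ℝ)..1, f x * (√2 * cos (k * x))| ≤ M' / k := by
  have hibp : ∫ x in (0 : ℝ)..1, f x * (√2 * cos (k * x))
      = -k⁻¹ * ∫ x in (0 : ℝ)..1, deriv f x * (√2 * sin (k * x)) := by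
    simp only [mul_left_comm _ √2, integral_const_mul, integral_mul_cos_mul hf hk.ne' hs]
  rw [hibp, abs_mul, abs_neg, abs_inv, abs_of_pos hk, div_eq_inv_mul]
  exact mul_le_mul_of_nonneg_left (abs_integral_mul_le_of_integral_sq_eq_one
    (hf.continuous_deriv le_rfl) (by fun_prop) hM' (integral_sqrt_two_mul_sin_mul_sq hk.ne' hs))
    (inv_nonneg.2 hk.le)

lemma exists_mem_Icc_eq_zero_of_integral_eq_zero {g : ℝ → ℝ} {a b : ℝ} (hab : a < b)
    (hg : ContinuousOn g (Icc a b)) (h : ∫ x in a..b, g x = 0) : ∃ x ∈ Icc a b, g x = 0 := by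
  rw [← uIcc_of_le hab.le] at hg
  obtain ⟨x, hx, hgx⟩ := exists_eq_interval_average hab.ne hg
  refine ⟨x, uIoo_subset_uIcc_self.trans (uIcc_of_le hab.le).subset hx, ?_⟩
  rw [hgx, interval_average_eq, h, smul_zero]

lemma abs_le_of_integral_eq_zero {g g' : ℝ → ℝ} {a b L : ℝ} (hab : a < b)
    (hg : ∀ x ∈ Icc a b, HasDerivWithinAt g (g' x) (Icc a b) x)
    (hg' : ∀ x ∈ Icc a b, |g' x| ≤ L) (h : ∫ x in a..b, g x = 0) :
    ∀ x ∈ Icc a b, |g x| ≤ L * (b - a) := by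
  obtain ⟨x₀, hx₀, hgx₀⟩ := exists_mem_Icc_eq_zero_of_integral_eq_zero hab
    (fun x hx => (hg x hx).continuousWithinAt) h
  intro x hx
  have hL : 0 ≤ L := (abs_nonneg _).trans (hg' x hx)
  have hdist : |x - x₀| ≤ b - a := abs_sub_le_of_le_of_le hx.1 hx.2 hx₀.1 hx₀.2
  calc |g x| = ‖g x - g x₀‖ := by rw [hgx₀, sub_zero, norm_eq_abs]
    _ ≤ L * ‖x - x₀‖ :=
        (convex_Icc a b).norm_image_sub_le_of_norm_hasDerivWithin_le hg hg' hx₀ hx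
    _ ≤ L * (b - a) := mul_le_mul_of_nonneg_left hdist hL

lemma abs_mul_sqrt_two_cos_mul_sub_integral_le {f : ℝ → ℝ} (hf : ContDiff ℝ 1 f)
    {k M M' : ℝ} (hk : 0 ≤ k) (hM : ∀ x ∈ Icc (0 : ℝ) 1, |f x| ≤ M)
    (hM' : ∀ x ∈ Icc (0 : ℝ) 1, |deriv f x| ≤ M') {x : ℝ} (hx : x ∈ Icc (0 : ℝ) 1) :
    |f x * (√2 * cos (k * x)) - ∫ y in (0 : ℝ)..1, f y * (√2 * cos (k * y))|
      ≤ √2 * (k * M + M') := by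
  set c := ∫ y in (0 : ℝ)..1, f y * (√2 * cos (k * y))
  have hderiv : ∀ y, HasDerivAt (fun y => f y * (√2 * cos (k * y)) - c)
      (deriv f y * (√2 * cos (k * y)) + f y * (√2 * (-sin (k * y) * (k * 1)))) y := fun y =>
    ((hf.differentiable one_ne_zero y).hasDerivAt.mul
      ((((hasDerivAt_id' y).const_mul k).cos).const_mul √2)).sub_const c
  have hderiv_le : ∀ y ∈ Icc (0 : ℝ) 1,
      |deriv f y * (√2 * cos (k * y)) + f y * (√2 * (-sin (k * y) * (k * 1)))|
        ≤ √2 * (k * M + M') := by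
    intro y hy
    have hM0 : 0 ≤ M := (abs_nonneg _).trans (hM y hy)
    have hM'0 : 0 ≤ M' := (abs_nonneg _).trans (hM' y hy)
    calc _ ≤ |deriv f y| * √2 * |cos (k * y)| + |f y| * √2 * |sin (k * y)| * k := by
          refine (abs_add_le _ _).trans (le_of_eq ?_)
          simp only [abs_mul, abs_neg, abs_of_nonneg (sqrt_nonneg 2), abs_of_nonneg hk, mul_one]
          ring
      _ ≤ M' * √2 * 1 + M * √2 * 1 * k := by
          gcongr
          exacts [hM' y hy, abs_cos_le_one _, hM y hy, abs_sin_le_one _]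
      _ = √2 * (k * M + M') := by ring
  have hmean : ∫ y in (0 : ℝ)..1, (f y * (√2 * cos (k * y)) - c) = 0 := by
    rw [integral_sub ((by fun_prop : Continuous fun y => f y * (√2 * cos (k * y))
      ).intervalIntegrable _ _) intervalIntegrable_const]
    simp [c]
  simpa using abs_le_of_integral_eq_zero zero_lt_one (fun y _ => (hderiv y).hasDerivWithinAt)
    hderiv_le hmean x hx

/-- Sup-norm bound on the centered product function `h̃_ℓ = f φ_ℓ − c_ℓ`:
`sup|f φ_ℓ − c_ℓ| ≤ min( √2 sup|f| + min(sup|f|, sup|f′|/(πℓ)),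
√2 (πℓ sup|f| + sup|f′|) )`. -/
theorem centered_product_sup_bound
    (φ : ℕ → ℝ → ℝ)
    (hφ : ∀ ℓ x, φ ℓ x =
      if ℓ = 0 then 1 else Real.sqrt 2 * Real.cos (Real.pi * ℓ * x))
    (f : ℝ → ℝ) (hf : ContDiff ℝ 1 f)
    (ℓ : ℕ) (hℓ : 1 ≤ ℓ)
    (c : ℝ) (hc : c = ∫ x in (0 : ℝ)..1, f x * φ ℓ x) :
    (⨆ x : Set.Icc (0 : ℝ) 1, |f x.1 * φ ℓ x.1 - c|)
      ≤ min
        (Real.sqrt 2 * (⨆ x : Set.Icc (0 : ℝ) 1, |f x.1|)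
          + min (⨆ x : Set.Icc (0 : ℝ) 1, |f x.1|)
              ((⨆ x : Set.Icc (0 : ℝ) 1, |deriv f x.1|) / (Real.pi * ℓ)))
        (Real.sqrt 2 * (Real.pi * ℓ * (⨆ x : Set.Icc (0 : ℝ) 1, |f x.1|)
          + ⨆ x : Set.Icc (0 : ℝ) 1, |deriv f x.1|)) := by
  set M := ⨆ x : Icc (0 : ℝ) 1, |f x|
  set M' := ⨆ x : Icc (0 : ℝ) 1, |deriv f x|
  set k := π * ℓ
  have hk : 0 < k := by positivity
  have hs : sin k = 0 := by simpa [k, mul_comm] using sin_nat_mul_pi ℓ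
  have hφℓ : ∀ x, φ ℓ x = √2 * cos (k * x) := fun x => by simp [hφ, k, show ℓ ≠ 0 by omega]
  have hM : ∀ x ∈ Icc (0 : ℝ) 1, |f x| ≤ M := fun x hx => abs_le_iSup_Icc hf.continuous hx
  have hM' : ∀ x ∈ Icc (0 : ℝ) 1, |deriv f x| ≤ M' := fun x hx =>
    abs_le_iSup_Icc (hf.continuous_deriv le_rfl) hx
  simp only [hφℓ] at hc ⊢
  subst hc
  have hc_le : |∫ x in (0 : ℝ)..1, f x * (√2 * cos (k * x))| ≤ min M (M' / k) :=
    le_min (abs_integral_mul_le_of_integral_sq_eq_one hf.continuous (by fun_prop) hM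
        (integral_sqrt_two_mul_cos_mul_sq hk.ne' hs))
      (abs_integral_mul_sqrt_two_cos_mul_le_of_deriv hf hk hs hM')
  refine ciSup_le fun ⟨x, hx⟩ =>
    le_min ?_ (abs_mul_sqrt_two_cos_mul_sub_integral_le hf hk.le hM hM' hx)
  have hfφ : |f x * (√2 * cos (k * x))| ≤ √2 * M := by
    rw [abs_mul, abs_mul, abs_of_nonneg (sqrt_nonneg 2), mul_left_comm]
    exact mul_le_mul_of_nonneg_left
      ((mul_le_of_le_one_right (abs_nonneg _) (abs_cos_le_one _)).trans (hM x hx)) (sqrt_nonneg 2)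
  exact (abs_sub _ _).trans (add_le_add hfφ hc_le)
end
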